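/- Assume c(δ) = 1, and let η⁽¹⁾,…,η⁽ʳ⁾ ∈ R_c⁺ be such that for some bijection σ of {1,…,r} one has (η⁽ⁱ⁾,η⁽ʲ⁾) = (e_{σ(i)},e_{σ(j)}) for all i,j. Then {η⁽¹⁾,…,η⁽ʳ⁾} is a set of simple roots for R_c: every element of R_c⁺ is an ℕ-linear combination of η⁽¹⁾,…,η⁽ʳ⁾, and for all integers m_1,…,m_r one has Σ_i m_i·e_{σ(i)} ∈ Φ if and only if Σ_i m_i·η⁽ⁱ⁾ ∈ R_c (so R_c is isomorphic to Φ as a root system). -/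

import Mathlib

open Finset

namespace AffineRoots

/-- The vertex set `I = {0,1,…,r}` of the graph. -/
abbrev I (r : ℕ) := Fin (r + 1)

/-- The root lattice `Q = ℤ^I`. -/
abbrev Q (r : ℕ) := I r → ℤ

variable (r : ℕ)

/-- The standard basis vector (simple root) `e_i` of `Q`. -/
def e (i : I r) : Q r := Pi.single i 1

/-- The Cartan pairing matrix `(e_i, e_j) = 2·[i=j] − a_{ij}` attached to a graph with
`a i j` edges between `i` and `j`. -/
def cartan (a : I r → I r → ℕ) (i j : I r) : ℤ :=
  (if i = j then 2 else 0) - (a i j : ℤ)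

/-- The symmetric bilinear form on `Q` determined by the Cartan pairing. -/
def B (a : I r → I r → ℕ) (α β : Q r) : ℤ :=
  ∑ i, ∑ j, α i * cartan r a i j * β j

/-- The reflection `s_i(α) = α − (α,e_i)·e_i`. -/
def refl (a : I r → I r → ℕ) (i : I r) (α : Q r) : Q r :=
  α - B r a α (e r i) • e r i

/-- The Weyl group `W`: the group of bijections of `Q` generated by the reflections. -/
def W (a : I r → I r → ℕ) : Subgroup (Equiv.Perm (Q r)) :=
  Subgroup.closure {σ | ∃ i : I r, ∀ α, σ α = refl r a i α}

/-- The support of `α` is connected in the graph. -/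
def SuppConnected (a : I r → I r → ℕ) (α : Q r) : Prop :=
  ∀ i j : I r, α i ≠ 0 → α j ≠ 0 →
    Relation.ReflTransGen (fun x y => α x ≠ 0 ∧ α y ≠ 0 ∧ 0 < a x y) i j

/-- The fundamental region `F`: nonzero `α ∈ ℕ^I` with connected support and
`(α,e_i) ≤ 0` for all `i`. -/
def Fund (a : I r → I r → ℕ) : Set (Q r) :=
  {α | α ≠ 0 ∧ (∀ i, 0 ≤ α i) ∧ SuppConnected r a α ∧ ∀ i, B r a α (e r i) ≤ 0}

/-- The real roots: the `W`-orbits of the basis vectors. -/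
def RealRoots (a : I r → I r → ℕ) : Set (Q r) :=
  {α | ∃ σ ∈ W r a, ∃ i, α = σ (e r i)}

/-- The imaginary roots: `W·F` and its negative. -/
def ImRoots (a : I r → I r → ℕ) : Set (Q r) :=
  {α | ∃ σ ∈ W r a, ∃ β ∈ Fund r a, α = σ β ∨ α = -(σ β)}

/-- The root system `R`, consisting of all real and imaginary roots. -/
def Roots (a : I r → I r → ℕ) : Set (Q r) := RealRoots r a ∪ ImRoots r a

/-- The positive roots `R⁺ = R ∩ ℕ^I`. -/
def PosRoots (a : I r → I r → ℕ) : Set (Q r) :=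
  {α ∈ Roots r a | ∀ i, 0 ≤ α i}

/-- `R_c = {α ∈ R : c(α) = 0}`. -/
def Rc (a : I r → I r → ℕ) (c : Q r →ₗ[ℤ] ℂ) : Set (Q r) :=
  {α ∈ Roots r a | c α = 0}

/-- `R_c⁺ = R_c ∩ R⁺`. -/
def RcPos (a : I r → I r → ℕ) (c : Q r →ₗ[ℤ] ℂ) : Set (Q r) :=
  Rc r a c ∩ PosRoots r a

/-- `Δ(c)`: the minimal elements of `R_c⁺`, i.e. those which cannot be written as a sum
of two elements of `R_c⁺`. -/
def Dc (a : I r → I r → ℕ) (c : Q r →ₗ[ℤ] ℂ) : Set (Q r) :=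
  {α ∈ RcPos r a c | ¬ ∃ β ∈ RcPos r a c, ∃ γ ∈ RcPos r a c, α = β + γ}

/-- The hypotheses characterizing a simply laced affine Dynkin graph, together with the
distinguished imaginary root `δ`: the graph (with `a i j` edges between `i` and `j`) is
symmetric, loopless and connected; the Cartan form is positive semidefinite; and the
radical of the form is `ℤδ`, where `δ` has positive coordinates and `δ_0 = 1`. -/
structure AffineData (a : I r → I r → ℕ) (δ : Q r) : Prop where
  symm : ∀ i j, a i j = a j i
  noloops : ∀ i, a i i = 0
  connected : ∀ i j : I r, Relation.ReflTransGen (fun x y => 0 < a x y) i j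
  posSemidef : ∀ α : Q r, 0 ≤ B r a α α
  delta_pos : ∀ i, 0 < δ i
  delta_zero : δ 0 = 1
  radical : ∀ α : Q r, (∀ β, B r a α β = 0) ↔ ∃ n : ℤ, α = n • δ

end AffineRoots

namespace AffineRoots

/-- The finite root system `Φ = {α ∈ R : α_0 = 0}` with simple roots `e_1,…,e_r`. -/
def Phi (r : ℕ) (a : I r → I r → ℕ) : Set (Q r) :=
  {α ∈ Roots r a | α 0 = 0}

end AffineRoots

/-!
Every root in `R_c` has norm `(α, α) = 2`: the imaginary roots are the nonzero multiples of `δ`,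
on which `c` does not vanish. Conversely every norm-2 vector is a real root: its coordinates have
one sign, and reflections lower a nonnegative one to a simple root. Since `δ` spans the radical,
`α ↦ α - α₀ δ` preserves the form and sends `R_c` into the finite set `Φ` of norm-2 vectors with
vanishing `0`-th coordinate. The projections `ηᵢ - (ηᵢ)₀ δ` have the Gram matrix of the
`e_{σ(i)}`, so `Σ mᵢ e_{σ(i)} ↦ Σ mᵢ (ηᵢ - (ηᵢ)₀ δ)` is a norm-preserving injection of `Φ` into
itself, hence onto. Thus every `α ∈ R_c` is `Σ mᵢ ηᵢ` plus a multiple of `δ`, which `c(δ) = 1`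
forces to vanish, and the `mᵢ` have the common sign of the norm-2 vector `Σ mᵢ e_{σ(i)}`.
-/

namespace AffineRoots

variable {r : ℕ} {a : I r → I r → ℕ} {δ : Q r}

variable (r a) in
def bilinForm : LinearMap.BilinForm ℤ (Q r) := Matrix.toLinearMap₂' ℤ (Matrix.of (cartan r a))

@[simp] lemma bilinForm_apply (x y : Q r) : bilinForm r a x y = B r a x y := by
  simp only [bilinForm, Matrix.toLinearMap₂'_apply, Matrix.of_apply, smul_eq_mul, B]
  exact Finset.sum_congr rfl fun _ _ => Finset.sum_congr rfl fun _ _ => by ring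

lemma B_zero_left (y : Q r) : B r a 0 y = 0 := by
  simp only [← bilinForm_apply, map_zero, LinearMap.zero_apply]

lemma B_sub_left (x y z : Q r) : B r a (x - y) z = B r a x z - B r a y z := by
  simp only [← bilinForm_apply, map_sub, LinearMap.sub_apply]

lemma B_sub_right (x y z : Q r) : B r a x (y - z) = B r a x y - B r a x z := by
  simp only [← bilinForm_apply, map_sub]

lemma B_add_left (x y z : Q r) : B r a (x + y) z = B r a x z + B r a y z := by
  simp only [← bilinForm_apply, map_add, LinearMap.add_apply]

lemma B_add_right (x y z : Q r) : B r a x (y + z) = B r a x y + B r a x z := by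
  simp only [← bilinForm_apply, map_add]

lemma B_smul_left (n : ℤ) (x y : Q r) : B r a (n • x) y = n * B r a x y := by
  simp only [← bilinForm_apply, map_zsmul, LinearMap.smul_apply, smul_eq_mul]

lemma B_smul_right (n : ℤ) (x y : Q r) : B r a x (n • y) = n * B r a x y := by
  simp only [← bilinForm_apply, map_zsmul, smul_eq_mul]

lemma B_neg_left (x y : Q r) : B r a (-x) y = -B r a x y := by
  simp only [← bilinForm_apply, map_neg, LinearMap.neg_apply]

lemma B_neg_right (x y : Q r) : B r a x (-y) = -B r a x y := by
  simp only [← bilinForm_apply, map_neg]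

lemma B_sum_smul_sum_smul {ι κ : Type*} [Fintype ι] [Fintype κ] (m : ι → ℤ) (u : ι → Q r)
    (n : κ → ℤ) (v : κ → Q r) :
    B r a (∑ i, m i • u i) (∑ j, n j • v j) = ∑ i, ∑ j, m i * n j * B r a (u i) (v j) := by
  simp only [← bilinForm_apply, map_sum, map_zsmul, LinearMap.sum_apply, LinearMap.smul_apply,
    smul_eq_mul, Finset.mul_sum]
  rw [Finset.sum_comm]
  exact Finset.sum_congr rfl fun _ _ => Finset.sum_congr rfl fun _ _ => by ring

lemma B_sum_smul_self_congr {ι : Type*} [Fintype ι] {u v : ι → Q r}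
    (h : ∀ i j, B r a (u i) (u j) = B r a (v i) (v j)) (m : ι → ℤ) :
    B r a (∑ i, m i • u i) (∑ i, m i • u i) = B r a (∑ i, m i • v i) (∑ i, m i • v i) := by
  simp only [B_sum_smul_sum_smul, h]

lemma sum_smul_e (y : Q r) : ∑ j, y j • e r j = y := by
  funext k
  simp [e, Pi.single_apply]

lemma B_eq_sum_B_e (x y : Q r) : B r a x y = ∑ j, B r a x (e r j) * y j := by
  conv_lhs => rw [← sum_smul_e y]
  simp only [← bilinForm_apply, map_sum, map_zsmul, smul_eq_mul, mul_comm]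

lemma e_apply (i j : I r) : e r i j = if j = i then 1 else 0 :=
  Pi.single_apply i 1 j

lemma sum_e (i : I r) : ∑ j, e r i j = 1 := by
  simp [e_apply]

lemma B_e_e (i j : I r) : B r a (e r i) (e r j) = cartan r a i j := by
  simp [B, e, Pi.single_apply]

lemma B_e_self (hno : ∀ i, a i i = 0) (i : I r) : B r a (e r i) (e r i) = 2 := by
  simp [B_e_e, cartan, hno]

lemma B_comm (hsymm : ∀ i j, a i j = a j i) (x y : Q r) : B r a x y = B r a y x := by
  rw [B, B, Finset.sum_comm]
  refine Finset.sum_congr rfl fun i _ => Finset.sum_congr rfl fun j _ => ?_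
  by_cases hij : i = j
  · subst hij; ring
  · simp only [cartan, hsymm j i, if_neg hij, if_neg (Ne.symm hij)]; ring

lemma bilinForm_isSymm (hsymm : ∀ i j, a i j = a j i) : LinearMap.IsSymm (bilinForm r a) :=
  LinearMap.BilinForm.isSymm_iff.mp ⟨fun x y => by simp [B_comm hsymm x y]⟩

lemma B_add_self (hsymm : ∀ i j, a i j = a j i) (x y : Q r) :
    B r a (x + y) (x + y) = B r a x x + 2 * B r a x y + B r a y y := by
  rw [B_add_left, B_add_right, B_add_right, B_comm hsymm y x]
  ring

lemma even_B_self (hsymm : ∀ i j, a i j = a j i) (hno : ∀ i, a i i = 0) (x : Q r) :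
    Even (B r a x x) := by
  suffices ∀ s : Finset (I r), Even (B r a (∑ j ∈ s, x j • e r j) (∑ j ∈ s, x j • e r j)) by
    simpa only [sum_smul_e] using this univ
  intro s
  induction s using Finset.induction_on with
  | empty => simp [B_zero_left]
  | insert j s hj ih =>
    simp only [Finset.sum_insert hj, B_add_self hsymm, B_smul_left, B_smul_right, B_e_self hno]
    obtain ⟨k, hk⟩ := ih
    exact ⟨x j * x j + x j * B r a (e r j) (∑ i ∈ s, x i • e r i) + k, by rw [hk]; ring⟩

lemma B_nonpos_of_mul_eq_zero {u v : Q r} (hu : 0 ≤ u) (hv : 0 ≤ v)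
    (huv : ∀ i, u i * v i = 0) : B r a u v ≤ 0 := by
  refine Finset.sum_nonpos fun i _ => Finset.sum_nonpos fun j _ => ?_
  by_cases hij : i = j
  · subst hij
    rw [mul_right_comm, huv, zero_mul]
  · have hc : cartan r a i j ≤ 0 := by simp [cartan, hij]
    nlinarith [mul_nonneg (hu i) (hv j)]

section Coordinates

variable (σ : Equiv.Perm (Fin r))

lemma sum_smul_e_succ_apply_zero (m : Fin r → ℤ) : (∑ i, m i • e r (σ i).succ) 0 = 0 := by
  rw [Finset.sum_apply]
  exact Finset.sum_eq_zero fun i _ => by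
    rw [Pi.smul_apply, e_apply, if_neg (Fin.succ_ne_zero _).symm, smul_zero]

lemma sum_smul_e_succ_apply_succ (m : Fin r → ℤ) (j : Fin r) :
    (∑ i, m i • e r (σ i).succ) (σ j).succ = m j := by
  rw [Finset.sum_apply, Finset.sum_eq_single_of_mem j (mem_univ j) fun i _ hij => by
    rw [Pi.smul_apply, e_apply, if_neg (by simpa using hij.symm), smul_zero]]
  rw [Pi.smul_apply, e_apply, if_pos rfl, smul_eq_mul, mul_one]

lemma sum_smul_e_succ_eq {x : Q r} (hx : x 0 = 0) :
    ∑ i, x (σ i).succ • e r (σ i).succ = x := by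
  conv_rhs => rw [← sum_smul_e x, Fin.sum_univ_succ, hx, zero_smul, zero_add]
  exact Equiv.sum_comp σ (fun j => x j.succ • e r j.succ)

end Coordinates

namespace AffineData

lemma B_delta_left (hdata : AffineData r a δ) (x : Q r) : B r a δ x = 0 :=
  (hdata.radical δ).2 ⟨1, (one_smul ℤ δ).symm⟩ x

lemma B_delta_right (hdata : AffineData r a δ) (x : Q r) : B r a x δ = 0 := by
  rw [B_comm hdata.symm, hdata.B_delta_left]

lemma B_sub_zsmul_delta (hdata : AffineData r a δ) (x y : Q r) (m n : ℤ) :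
    B r a (x - m • δ) (y - n • δ) = B r a x y := by
  simp only [B_sub_left, B_sub_right, B_smul_left, B_smul_right, hdata.B_delta_left,
    hdata.B_delta_right]
  ring

lemma bilinForm_nonneg (hdata : AffineData r a δ) (x : Q r) : 0 ≤ bilinForm r a x x := by
  simpa using hdata.posSemidef x

lemma exists_eq_zsmul_of_B_self_eq_zero (hdata : AffineData r a δ) {x : Q r}
    (hx : B r a x x = 0) : ∃ n : ℤ, x = n • δ := by
  have hker := ((bilinForm r a).apply_apply_same_eq_zero_iff hdata.bilinForm_nonneg
    (bilinForm_isSymm hdata.symm)).1 (by simpa using hx)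
  exact (hdata.radical x).1 fun y => by simpa using LinearMap.congr_fun hker y

lemma sq_B_le (hdata : AffineData r a δ) (x y : Q r) :
    B r a x y ^ 2 ≤ B r a x x * B r a y y := by
  simpa using (bilinForm r a).apply_sq_le_of_symm hdata.bilinForm_nonneg
    (bilinForm_isSymm hdata.symm) x y

lemma eq_zero_or_pos_of_B_self_eq_zero (hdata : AffineData r a δ) {y : Q r} (hy : 0 ≤ y)
    (hyy : B r a y y = 0) : y = 0 ∨ ∀ i, 0 < y i := by
  obtain ⟨n, rfl⟩ := hdata.exists_eq_zsmul_of_B_self_eq_zero hyy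
  have hn : 0 ≤ n := by simpa [hdata.delta_zero] using hy 0
  rcases hn.eq_or_lt with rfl | hn
  · simp
  · exact Or.inr fun i => mul_pos hn (hdata.delta_pos i)

/-- Write `x = x⁺ - x⁻`. Since `B x⁺ x⁻ ≤ 0`, the even numbers `B x⁺ x⁺, B x⁻ x⁻ ≥ 0` sum to at
most `2`, so one of `x⁺, x⁻` is isotropic, hence a nonnegative multiple of `δ`, hence zero or
positive everywhere. -/
lemma nonneg_or_nonpos_of_B_self_eq_two (hdata : AffineData r a δ) {x : Q r}
    (hx : B r a x x = 2) : 0 ≤ x ∨ x ≤ 0 := by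
  have hcross : B r a x⁺ x⁻ ≤ 0 :=
    B_nonpos_of_mul_eq_zero (posPart_nonneg x) (negPart_nonneg x) fun i => by
      rcases le_total (x i) 0 with h | h
      · simp [posPart_eq_zero.2 h]
      · simp [negPart_eq_zero.2 h]
  have hsplit : B r a x x = B r a x⁺ x⁺ + B r a x⁻ x⁻ - 2 * B r a x⁺ x⁻ := by
    conv_lhs => rw [← posPart_sub_negPart x]
    rw [B_sub_left, B_sub_right, B_sub_right, B_comm hdata.symm x⁻ x⁺]
    ring
  obtain ⟨p, hp⟩ := even_B_self hdata.symm hdata.noloops x⁺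
  obtain ⟨q, hq⟩ := even_B_self hdata.symm hdata.noloops x⁻
  have := hdata.posSemidef x⁺
  have := hdata.posSemidef x⁻
  rcases (by omega : B r a x⁺ x⁺ = 0 ∨ B r a x⁻ x⁻ = 0) with h | h
  · rcases hdata.eq_zero_or_pos_of_B_self_eq_zero (posPart_nonneg x) h with h0 | hpos
    · exact Or.inr (posPart_eq_zero.1 h0)
    · exact Or.inl fun i => (posPart_pos_iff.1 (hpos i)).le
  · rcases hdata.eq_zero_or_pos_of_B_self_eq_zero (negPart_nonneg x) h with h0 | hpos
    · exact Or.inl (negPart_eq_zero.1 h0)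
    · exact Or.inr fun i => (negPart_pos_iff.1 (hpos i)).le

end AffineData

lemma refl_refl (hno : ∀ i, a i i = 0) (i : I r) (x : Q r) :
    refl r a i (refl r a i x) = x := by
  simp only [refl, B_sub_left, B_smul_left, B_e_self hno]
  module

lemma refl_neg (i : I r) (x : Q r) : refl r a i (-x) = -refl r a i x := by
  simp only [refl, B_neg_left, neg_smul]
  abel

lemma refl_e_self (hno : ∀ i, a i i = 0) (i : I r) : refl r a i (e r i) = -e r i := by
  rw [refl, B_e_self hno]
  module

lemma B_refl_refl (hsymm : ∀ i j, a i j = a j i) (hno : ∀ i, a i i = 0) (i : I r)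
    (x y : Q r) : B r a (refl r a i x) (refl r a i y) = B r a x y := by
  simp only [refl, B_sub_left, B_sub_right, B_smul_left, B_smul_right, B_e_self hno,
    B_comm hsymm (e r i) y]
  ring

variable (a) in
def reflPerm (hno : ∀ i, a i i = 0) (i : I r) : Equiv.Perm (Q r) :=
  Function.Involutive.toPerm (refl r a i) (refl_refl hno i)

lemma reflPerm_mem_W (hno : ∀ i, a i i = 0) (i : I r) : reflPerm a hno i ∈ W r a :=
  Subgroup.subset_closure ⟨i, fun _ => rfl⟩

lemma B_apply_of_mem_W (hsymm : ∀ i j, a i j = a j i) (hno : ∀ i, a i i = 0)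
    {w : Equiv.Perm (Q r)} (hw : w ∈ W r a) (x y : Q r) : B r a (w x) (w y) = B r a x y := by
  induction hw using Subgroup.closure_induction generalizing x y with
  | mem w hw =>
    obtain ⟨i, hi⟩ := hw
    rw [hi, hi, B_refl_refl hsymm hno]
  | one => rfl
  | mul v w _ _ hv hw => rw [Equiv.Perm.mul_apply, Equiv.Perm.mul_apply, hv, hw]
  | inv w _ hw => rw [← hw]; simp

lemma AffineData.apply_zsmul_delta_of_mem_W (hdata : AffineData r a δ) {w : Equiv.Perm (Q r)}
    (hw : w ∈ W r a) (n : ℤ) : w (n • δ) = n • δ := by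
  suffices W r a ≤ MulAction.stabilizer (Equiv.Perm (Q r)) (n • δ) from this hw
  refine (Subgroup.closure_le _).2 ?_
  rintro _ ⟨i, hi⟩
  rw [SetLike.mem_coe, MulAction.mem_stabilizer_iff, Equiv.Perm.smul_def, hi, refl,
    B_smul_left, hdata.B_delta_left, mul_zero, zero_smul, sub_zero]

lemma e_mem_RealRoots (i : I r) : e r i ∈ RealRoots r a :=
  ⟨1, one_mem _, i, rfl⟩

lemma refl_mem_RealRoots (hno : ∀ i, a i i = 0) (i : I r) {x : Q r}
    (hx : x ∈ RealRoots r a) : refl r a i x ∈ RealRoots r a := by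
  obtain ⟨w, hw, j, rfl⟩ := hx
  exact ⟨reflPerm a hno i * w, mul_mem (reflPerm_mem_W hno i) hw, j, rfl⟩

lemma B_self_eq_two_of_mem_RealRoots (hsymm : ∀ i j, a i j = a j i) (hno : ∀ i, a i i = 0)
    {x : Q r} (hx : x ∈ RealRoots r a) : B r a x x = 2 := by
  obtain ⟨w, hw, i, rfl⟩ := hx
  rw [B_apply_of_mem_W hsymm hno hw, B_e_self hno]

/-- Since `∑ i, (x, e_i) x_i = (x, x) = 2`, some `i` has `k = (x, e_i) > 0` and `x_i > 0`. If
`x_i ≥ k` the reflection `s_i` lowers the height of `x` by `k`; otherwise positivity of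
`(x - e_i, x - e_i) = 4 - 2k` forces `k = 2`, `x_i = 1`, and `x - e_i` is a multiple of `δ`
vanishing at `i`. -/
lemma AffineData.eq_e_or_refl_nonneg_of_nonneg (hdata : AffineData r a δ) {x : Q r}
    (hx : 0 ≤ x) (h2 : B r a x x = 2) :
    (∃ i, x = e r i) ∨ ∃ i, 0 ≤ refl r a i x ∧ ∑ j, refl r a i x j < ∑ j, x j := by
  obtain ⟨i, hi⟩ : ∃ i, 0 < B r a x (e r i) * x i := by
    by_contra! h
    have := Finset.sum_nonpos fun i (_ : i ∈ univ) => h i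
    rw [← B_eq_sum_B_e, h2] at this
    omega
  set k := B r a x (e r i)
  have hk0 : 0 < k := pos_of_mul_pos_left hi (hx i)
  have hxi : 0 < x i := pos_of_mul_pos_right hi hk0.le
  have hrefl : refl r a i x = x - k • e r i := rfl
  by_cases hki : k ≤ x i
  · refine Or.inr ⟨i, fun j => ?_, ?_⟩
    · have hxj : 0 ≤ x j := hx j
      rw [Pi.zero_apply, hrefl, Pi.sub_apply, Pi.smul_apply, e_apply, smul_eq_mul]
      split_ifs with hji
      · subst hji; linarith
      · linarith
    · simp only [hrefl, Pi.sub_apply, Pi.smul_apply, smul_eq_mul, Finset.sum_sub_distrib,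
        ← Finset.mul_sum, sum_e]
      omega
  · have hsq : B r a (x - e r i) (x - e r i) = 4 - 2 * k := by
      rw [B_sub_left, B_sub_right, B_sub_right, B_comm hdata.symm (e r i) x, h2,
        B_e_self hdata.noloops]
      ring
    have hk2 : k = 2 := by
      have := hdata.posSemidef (x - e r i)
      omega
    obtain ⟨n, hn⟩ := hdata.exists_eq_zsmul_of_B_self_eq_zero (by rw [hsq, hk2]; rfl)
    have hn0 : n = 0 := by
      have hδi := hdata.delta_pos i
      have := congrFun hn i
      simp only [Pi.sub_apply, e_apply, ↓reduceIte, Pi.smul_apply, smul_eq_mul] at this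
      nlinarith
    exact Or.inl ⟨i, by rw [← sub_eq_zero, hn, hn0, zero_smul]⟩

lemma AffineData.mem_RealRoots_of_nonneg (hdata : AffineData r a δ) {x : Q r} (hx : 0 ≤ x)
    (h2 : B r a x x = 2) : x ∈ RealRoots r a ∧ -x ∈ RealRoots r a := by
  rcases hdata.eq_e_or_refl_nonneg_of_nonneg hx h2 with ⟨i, rfl⟩ | ⟨i, hpos, hlt⟩
  · refine ⟨e_mem_RealRoots i, ?_⟩
    rw [← refl_e_self hdata.noloops]
    exact refl_mem_RealRoots hdata.noloops i (e_mem_RealRoots i)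
  · have ih := hdata.mem_RealRoots_of_nonneg hpos
      (by rw [B_refl_refl hdata.symm hdata.noloops, h2])
    rw [← refl_refl hdata.noloops i x, ← refl_neg]
    exact ⟨refl_mem_RealRoots hdata.noloops i ih.1, refl_mem_RealRoots hdata.noloops i ih.2⟩
termination_by (∑ j, x j).toNat
decreasing_by
  have := Finset.sum_nonneg fun j (_ : j ∈ univ) => hpos j
  omega

lemma AffineData.mem_RealRoots_of_B_self_eq_two (hdata : AffineData r a δ) {x : Q r}
    (hx : B r a x x = 2) : x ∈ RealRoots r a := by
  rcases hdata.nonneg_or_nonpos_of_B_self_eq_two hx with h | h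
  · exact (hdata.mem_RealRoots_of_nonneg h hx).1
  · have h2 : B r a (-x) (-x) = 2 := by rw [B_neg_left, B_neg_right, neg_neg, hx]
    simpa using (hdata.mem_RealRoots_of_nonneg (neg_nonneg.2 h) h2).2

namespace AffineData

lemma exists_eq_zsmul_of_mem_Fund (hdata : AffineData r a δ) {β : Q r} (hβ : β ∈ Fund r a) :
    ∃ n : ℤ, n ≠ 0 ∧ β = n • δ := by
  obtain ⟨hne, hpos, -, hneg⟩ := hβ
  have h0 : B r a β β = 0 := by
    refine le_antisymm ?_ (hdata.posSemidef β)
    rw [B_eq_sum_B_e]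
    exact Finset.sum_nonpos fun j _ => mul_nonpos_of_nonpos_of_nonneg (hneg j) (hpos j)
  obtain ⟨n, rfl⟩ := hdata.exists_eq_zsmul_of_B_self_eq_zero h0
  exact ⟨n, by rintro rfl; simp at hne, rfl⟩

lemma B_self_eq_two_or_of_mem_Roots (hdata : AffineData r a δ) {α : Q r}
    (hα : α ∈ Roots r a) : B r a α α = 2 ∨ ∃ n : ℤ, n ≠ 0 ∧ α = n • δ := by
  rcases hα with hα | ⟨w, hw, β, hβ, hα⟩
  · exact Or.inl (B_self_eq_two_of_mem_RealRoots hdata.symm hdata.noloops hα)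
  · obtain ⟨n, hn, rfl⟩ := hdata.exists_eq_zsmul_of_mem_Fund hβ
    rw [hdata.apply_zsmul_delta_of_mem_W hw, ← neg_smul] at hα
    rcases hα with rfl | rfl
    exacts [Or.inr ⟨n, hn, rfl⟩, Or.inr ⟨-n, neg_ne_zero.2 hn, rfl⟩]

lemma mem_Phi_iff (hdata : AffineData r a δ) {x : Q r} :
    x ∈ Phi r a ↔ x 0 = 0 ∧ B r a x x = 2 := by
  refine ⟨fun ⟨hx, h0⟩ => ⟨h0, ?_⟩,
    fun ⟨h0, h2⟩ => ⟨Or.inl (hdata.mem_RealRoots_of_B_self_eq_two h2), h0⟩⟩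
  obtain h | ⟨n, hn, rfl⟩ := hdata.B_self_eq_two_or_of_mem_Roots hx
  · exact h
  · simp [hdata.delta_zero, hn] at h0

lemma mem_Rc_iff (hdata : AffineData r a δ) {c : Q r →ₗ[ℤ] ℂ} (hc : c δ = 1) {x : Q r} :
    x ∈ Rc r a c ↔ B r a x x = 2 ∧ c x = 0 := by
  refine ⟨fun ⟨hx, hcx⟩ => ⟨?_, hcx⟩,
    fun ⟨h2, hcx⟩ => ⟨Or.inl (hdata.mem_RealRoots_of_B_self_eq_two h2), hcx⟩⟩
  obtain h | ⟨n, hn, rfl⟩ := hdata.B_self_eq_two_or_of_mem_Roots hx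
  · exact h
  · rw [map_zsmul, hc] at hcx
    simp [hn] at hcx

lemma Phi_finite (hdata : AffineData r a δ) : (Phi r a).Finite := by
  let f : Q r → I r → ℤ := fun x j => B r a x (e r j)
  have hinj : Set.InjOn f (Phi r a) := by
    intro x hx y hy hxy
    rw [hdata.mem_Phi_iff] at hx hy
    have hxy' : ∀ j, B r a x (e r j) = B r a y (e r j) := congrFun hxy
    obtain ⟨n, hn⟩ := (hdata.radical (x - y)).1 fun z => by
      rw [B_eq_sum_B_e]
      exact Finset.sum_eq_zero fun j _ => by rw [B_sub_left, hxy' j, sub_self, zero_mul]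
    have hn0 : n = 0 := by simpa [hx.1, hy.1, hdata.delta_zero] using (congrFun hn 0).symm
    rwa [hn0, zero_smul, sub_eq_zero] at hn
  refine Set.Finite.of_finite_image ((Set.finite_Icc (-2 : I r → ℤ) 2).subset ?_) hinj
  rintro _ ⟨x, hx, rfl⟩
  have hbound (j : I r) : B r a x (e r j) ^ 2 ≤ 2 ^ 2 := by
    simpa [((hdata.mem_Phi_iff).1 hx).2, B_e_self hdata.noloops] using hdata.sq_B_le x (e r j)
  exact ⟨fun j => by simpa using (abs_le_of_sq_le_sq' (hbound j) two_pos.le).1,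
    fun j => (abs_le_of_sq_le_sq' (hbound j) two_pos.le).2⟩

lemma exists_sum_smul_eq_of_mem_Phi (hdata : AffineData r a δ) (u : Fin r → Q r)
    (σ : Equiv.Perm (Fin r)) (hu : ∀ i, u i 0 = 0)
    (hgram : ∀ i j, B r a (u i) (u j) = B r a (e r (σ i).succ) (e r (σ j).succ))
    {x : Q r} (hx : x ∈ Phi r a) : ∃ m : Fin r → ℤ, x = ∑ i, m i • u i := by
  let ψ := Fintype.linearCombination ℤ u
  let χ := Fintype.linearCombination ℤ fun i => e r (σ i).succ
  have hψ (m) : ψ m = ∑ i, m i • u i := Fintype.linearCombination_apply ℤ u m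
  have hχ (m) : χ m = ∑ i, m i • e r (σ i).succ := Fintype.linearCombination_apply ℤ _ m
  have hB (m) : B r a (ψ m) (ψ m) = B r a (χ m) (χ m) := by
    rw [hψ, hχ, B_sum_smul_self_congr hgram]
  have hχ0 (m) : χ m 0 = 0 := by rw [hχ, sum_smul_e_succ_apply_zero]
  have hψ0 (m) : ψ m 0 = 0 := by
    rw [hψ, Finset.sum_apply]
    exact Finset.sum_eq_zero fun i _ => by rw [Pi.smul_apply, hu, smul_zero]
  have hχinj : Function.Injective χ := fun m m' h => funext fun j => by
    simpa only [hχ, sum_smul_e_succ_apply_succ] using congrFun h (σ j).succ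
  have hψinj : Function.Injective ψ := by
    refine (injective_iff_map_eq_zero ψ).2 fun m hm => hχinj ?_
    obtain ⟨n, hn⟩ := hdata.exists_eq_zsmul_of_B_self_eq_zero
      (show B r a (χ m) (χ m) = 0 by rw [← hB, hm, B_zero_left])
    have hn0 : n = 0 := by simpa [hχ0, hdata.delta_zero] using (congrFun hn 0).symm
    rw [hn, hn0, zero_smul, map_zero]
  let M := χ ⁻¹' Phi r a
  have hχM : χ '' M = Phi r a := Set.image_preimage_eq_of_subset fun y hy =>
    ⟨fun i => y (σ i).succ, by rw [hχ, sum_smul_e_succ_eq σ ((hdata.mem_Phi_iff).1 hy).1]⟩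
  have hψM : ψ '' M ⊆ Phi r a := by
    rintro _ ⟨m, hm, rfl⟩
    rw [Set.mem_preimage, hdata.mem_Phi_iff] at hm
    exact (hdata.mem_Phi_iff).2 ⟨hψ0 m, (hB m).trans hm.2⟩
  have hψM_eq : ψ '' M = Phi r a := Set.eq_of_subset_of_ncard_le hψM
    (by rw [← hχM, Set.ncard_image_of_injective _ hχinj, Set.ncard_image_of_injective _ hψinj])
    hdata.Phi_finite
  obtain ⟨m, -, rfl⟩ := hψM_eq ▸ hx
  exact ⟨m, hψ m⟩

lemma exists_int_coeffs_of_mem_Rc (hdata : AffineData r a δ) {c : Q r →ₗ[ℤ] ℂ}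
    (hc : c δ = 1) {η : Fin r → Q r} (hcη : ∀ i, c (η i) = 0) (σ : Equiv.Perm (Fin r))
    (hcartan : ∀ i j, B r a (η i) (η j) = B r a (e r (σ i).succ) (e r (σ j).succ))
    {α : Q r} (hα : α ∈ Rc r a c) : ∃ m : Fin r → ℤ, α = ∑ i, m i • η i := by
  obtain ⟨h2, hcα⟩ := (hdata.mem_Rc_iff hc).1 hα
  obtain ⟨m, hm⟩ := hdata.exists_sum_smul_eq_of_mem_Phi (x := α - α 0 • δ)
    (fun i => η i - η i 0 • δ) σ
    (fun i => by simp [hdata.delta_zero])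
    (fun i j => by rw [hdata.B_sub_zsmul_delta, hcartan])
    ((hdata.mem_Phi_iff).2 ⟨by simp [hdata.delta_zero], by rw [hdata.B_sub_zsmul_delta, h2]⟩)
  have hα : α = ∑ i, m i • η i + (α 0 - ∑ i, m i * η i 0) • δ := by
    simp only [smul_sub, smul_smul, Finset.sum_sub_distrib, ← Finset.sum_smul] at hm
    linear_combination (norm := module) hm
  have hk : α 0 - ∑ i, m i * η i 0 = 0 := by
    have := congrArg c hα
    rw [map_add, map_sum, map_zsmul, hc, hcα] at this
    simp only [map_zsmul, hcη, smul_zero, Finset.sum_const_zero, zero_add] at this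
    rwa [zsmul_one, eq_comm, Int.cast_eq_zero] at this
  exact ⟨m, by rw [hα, hk, zero_smul, add_zero]⟩

lemma exists_nat_coeffs_of_mem_RcPos (hdata : AffineData r a δ) {c : Q r →ₗ[ℤ] ℂ}
    (hc : c δ = 1) {η : Fin r → Q r} (hη : ∀ i, η i ∈ RcPos r a c) (σ : Equiv.Perm (Fin r))
    (hcartan : ∀ i j, B r a (η i) (η j) = B r a (e r (σ i).succ) (e r (σ j).succ))
    {α : Q r} (hα : α ∈ RcPos r a c) : ∃ m : Fin r → ℕ, α = ∑ i, (m i : ℤ) • η i := by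
  obtain ⟨m, rfl⟩ := hdata.exists_int_coeffs_of_mem_Rc hc (fun i => (hη i).1.2) σ hcartan hα.1
  have h2 := ((hdata.mem_Rc_iff hc).1 hα.1).1
  rw [B_sum_smul_self_congr hcartan] at h2
  rcases hdata.nonneg_or_nonpos_of_B_self_eq_two h2 with h | h
  · refine ⟨fun i => (m i).toNat, Finset.sum_congr rfl fun i _ => ?_⟩
    have hi := h (σ i).succ
    rw [Pi.zero_apply, sum_smul_e_succ_apply_succ] at hi
    rw [Int.toNat_of_nonneg hi]
  · exfalso
    have hnonpos : ∑ i, m i • η i ≤ 0 := Finset.sum_nonpos fun i _ => by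
      have hi := h (σ i).succ
      rw [Pi.zero_apply, sum_smul_e_succ_apply_succ] at hi
      exact smul_nonpos_of_nonpos_of_nonneg hi (hη i).2.2
    have hzero : ∑ i, m i • η i = 0 := le_antisymm hnonpos hα.2.2
    rw [← B_sum_smul_self_congr hcartan, hzero, B_zero_left] at h2
    exact two_ne_zero h2.symm

end AffineData

end AffineRoots

open AffineRoots in
/-- Assume `c(δ) = 1`, and let `η⁽¹⁾,…,η⁽ʳ⁾ ∈ R_c⁺` be such that for some bijection `σ`
of `{1,…,r}` one has `(η⁽ⁱ⁾,η⁽ʲ⁾) = (e_{σ(i)},e_{σ(j)})` for all `i,j`.  Then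
`{η⁽¹⁾,…,η⁽ʳ⁾}` is a set of simple roots for `R_c`: every element of `R_c⁺` is an
`ℕ`-linear combination of `η⁽¹⁾,…,η⁽ʳ⁾`, and for all integers `m_1,…,m_r` one has
`Σ_i m_i·e_{σ(i)} ∈ Φ` if and only if `Σ_i m_i·η⁽ⁱ⁾ ∈ R_c` (so `R_c` is isomorphic to
`Φ` as a root system). -/
theorem eta_simple_system (r : ℕ) (a : I r → I r → ℕ) (δ : Q r)
    (hdata : AffineData r a δ) (c : Q r →ₗ[ℤ] ℂ) (hc : c δ = 1)
    (η : Fin r → Q r) (hη : ∀ i, η i ∈ RcPos r a c)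
    (σ : Equiv.Perm (Fin r))
    (hcartan : ∀ i j : Fin r,
      B r a (η i) (η j) = B r a (e r (σ i).succ) (e r (σ j).succ)) :
    (∀ α ∈ RcPos r a c, ∃ m : Fin r → ℕ, α = ∑ i, (m i : ℤ) • η i) ∧
    (∀ m : Fin r → ℤ,
      (∑ i, m i • e r (σ i).succ) ∈ Phi r a ↔ (∑ i, m i • η i) ∈ Rc r a c) := by
  refine ⟨fun α hα => hdata.exists_nat_coeffs_of_mem_RcPos hc hη σ hcartan hα, fun m => ?_⟩
  have hcm : c (∑ i, m i • η i) = 0 := by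
    simp only [map_sum, map_zsmul, (hη _).1.2, smul_zero, Finset.sum_const_zero]
  rw [hdata.mem_Phi_iff, hdata.mem_Rc_iff hc, B_sum_smul_self_congr hcartan,
    sum_smul_e_succ_apply_zero]
  exact ⟨fun h => ⟨h.2, hcm⟩, fun h => ⟨rfl, h.1⟩⟩
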